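/- arXiv:2006.01663 — 4 statements merged into one kernel-verified Lean document; each statement's English description precedes it below -/
import Mathlib

section
/- Let N be a proper element of a multiplication lattice L-module M. Then N is a prime element of M if and only if (N:I_M) is a prime element of L. -/
open CompleteLattice

universe u v

/-- A multiplicative lattice: a complete lattice with a commutative, associative
multiplication distributing over arbitrary joins, whose greatest element `⊤` is the
multiplicative identity `1`.  Following the standing assumptions of the paper, we also
require that the lattice is compactly generated, that `1` is compact and that finite
products of compact elements are compact. -/
class MultiplicativeLattice (L : Type u) extends CompleteLattice L, CommMonoid L where
  mul_sSup : ∀ (a : L) (S : Set L), a * sSup S = ⨆ b ∈ S, a * b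
  one_eq_top : (1 : L) = ⊤
  compactlyGenerated : ∀ a : L, a = sSup {c : L | IsCompactElement c ∧ c ≤ a}
  top_compact : IsCompactElement (⊤ : L)
  mul_compact : ∀ a b : L, IsCompactElement a → IsCompactElement b →
    IsCompactElement (a * b)

/-- A lattice module `M` over a multiplicative lattice `L`. -/
class LatticeModule (L : Type u) [MultiplicativeLattice L] (M : Type v)
    extends CompleteLattice M, SMul L M where
  sSup_smul : ∀ (S : Set L) (A : M), (SupSet.sSup S : L) • A = ⨆ a ∈ S, a • A
  smul_sSup : ∀ (a : L) (S : Set M), a • (sSup S) = ⨆ B ∈ S, a • B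
  mul_smul : ∀ (a b : L) (A : M), (a * b) • A = a • b • A
  one_smul : ∀ A : M, (1 : L) • A = A
  bot_smul : ∀ A : M, (⊥ : L) • A = (⊥ : M)

section LDefs

variable {L : Type u} [MultiplicativeLattice L]

/-- The residual `(a : b)` in `L`. -/
def lcolon (a b : L) : L := sSup {x : L | x * b ≤ a}

/-- The radical `√a` of an element of `L`. -/
def lrad (a : L) : L :=
  sSup {x : L | IsCompactElement x ∧ ∃ n : ℕ, 0 < n ∧ x ^ n ≤ a}

/-- A prime element of `L`: proper, and `a * b ≤ p` implies `a ≤ p` or `b ≤ p`. -/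
def IsPrimeL (p : L) : Prop :=
  p < 1 ∧ ∀ a b : L, a * b ≤ p → a ≤ p ∨ b ≤ p

/-- A primary element of `L`: proper, and for compact `a, b`, `a * b ≤ q` implies
`a ≤ q` or `b ^ n ≤ q` for some positive `n`. -/
def IsPrimaryL (q : L) : Prop :=
  q < 1 ∧ ∀ a b : L, IsCompactElement a → IsCompactElement b → a * b ≤ q →
    a ≤ q ∨ ∃ n : ℕ, 0 < n ∧ b ^ n ≤ q

/-- A principal element of `L` (meet principal and join principal). -/
def IsPrincipalElemL (e : L) : Prop :=
  (∀ a b : L, a ⊓ b * e = (lcolon a e ⊓ b) * e) ∧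
  (∀ a b : L, lcolon (a * e ⊔ b) e = lcolon b e ⊔ a)

end LDefs

/-- `L` is a PG-lattice: every element is a join of principal elements. -/
def IsPGLattice (L : Type u) [MultiplicativeLattice L] : Prop :=
  ∀ a : L, a = sSup {p : L | IsPrincipalElemL p ∧ p ≤ a}

section MDefs

variable (L : Type u) {M : Type v} [MultiplicativeLattice L] [LatticeModule L M]

/-- The residual `(A : B) ∈ L` of two elements of `M`. -/
def colon (A B : M) : L := sSup {x : L | x • B ≤ A}

/-- The residual `(N : a) ∈ M` of an element of `M` by an element of `L`. -/
def mcolon (N : M) (a : L) : M := sSup {X : M | a • X ≤ N}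

/-- A prime element of `M`. -/
def IsPrimeM (N : M) : Prop :=
  N < ⊤ ∧ ∀ (a : L) (X : M), a • X ≤ N → X ≤ N ∨ a • (⊤ : M) ≤ N

/-- A primary element of `M`. -/
def IsPrimaryM (N : M) : Prop :=
  N < ⊤ ∧ ∀ (a : L) (X : M), a • X ≤ N →
    X ≤ N ∨ ∃ n : ℕ, 0 < n ∧ (a ^ n) • (⊤ : M) ≤ N

/-- The radical `rad N` of an element of `M`: the meet of all prime elements above it. -/
def mrad (N : M) : M := sInf {P : M | IsPrimeM L P ∧ N ≤ P}

/-- A pseudo-primary element of `M`. -/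
def IsPseudoPrimary (N : M) : Prop :=
  N < ⊤ ∧ ∀ (a : L) (X : M), a • X ≤ N → a ≤ colon L N ⊤ ∨ X ≤ mrad L N

/-- A classical prime element of `M`. -/
def IsClassicalPrime (N : M) : Prop :=
  N < ⊤ ∧ ∀ (a b : L) (K : M), (a * b) • K ≤ N → a • K ≤ N ∨ b • K ≤ N

/-- A pseudo-classical primary element of `M`. -/
def IsPseudoClassicalPrimary (N : M) : Prop :=
  N < ⊤ ∧ ∀ (a b : L) (K : M), (a * b) • K ≤ N → a • K ≤ N ∨ b • K ≤ mrad L N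

/-- A principal element of `M` (meet principal and join principal). -/
def IsPrincipalElem (N : M) : Prop :=
  (∀ (b : L) (B : M), (b ⊓ colon L B N) • N = b • N ⊓ B) ∧
  (∀ (b : L) (B : M), b ⊔ colon L B N = colon L (b • N ⊔ B) N)

/-- The saturation `S_p(N)` of `N` with respect to `p`. -/
def saturation (N : M) (p : L) : M :=
  sSup {X : M | ∃ c : L, ¬ c ≤ p ∧ c • X ≤ N}

variable (M)

/-- `M` is a PG-lattice `L`-module. -/
def IsPGModule : Prop := ∀ N : M, N = sSup {P : M | IsPrincipalElem L P ∧ P ≤ N}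

/-- `M` is a multiplication lattice `L`-module. -/
def IsMultiplicationModule : Prop := ∀ N : M, ∃ a : L, N = a • (⊤ : M)

/-- `M` is a faithful `L`-module. -/
def IsFaithful : Prop := colon L (⊥ : M) (⊤ : M) = (⊥ : L)

/-- `M` is a CG (compactly generated) lattice `L`-module. -/
def IsCGModule : Prop := ∀ N : M, N = sSup {K : M | IsCompactElement K ∧ K ≤ N}

end MDefs

section Aux

variable {L : Type u} {M : Type v} [MultiplicativeLattice L] [LatticeModule L M]

lemma smul_mono_left' {a b : L} (h : a ≤ b) (A : M) : a • A ≤ b • A := by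
  have hb : b = sSup {a, b} := by simp [sSup_pair, sup_eq_right.mpr h]
  rw [hb, LatticeModule.sSup_smul]
  exact le_biSup (fun x => x • A) (by simp : a ∈ ({a, b} : Set L))

lemma colon_smul_le (N B : M) : (colon L N B) • B ≤ N := by
  rw [colon, LatticeModule.sSup_smul]
  exact iSup₂_le fun x hx => hx

lemma le_colon_iff {x : L} {N B : M} : x ≤ colon L N B ↔ x • B ≤ N := by
  constructor
  · intro h
    exact le_trans (smul_mono_left' h B) (colon_smul_le N B)
  · intro h
    exact le_sSup h

end Aux

theorem stmt0 {L : Type u} {M : Type v} [MultiplicativeLattice L] [LatticeModule L M]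
    (hmul : IsMultiplicationModule L M) (N : M) (hN : N < ⊤) :
    IsPrimeM L N ↔ IsPrimeL (colon L N (⊤ : M)) := by
  constructor
  · rintro ⟨-, hp⟩
    constructor
    · rw [MultiplicativeLattice.one_eq_top]
      refine lt_of_le_of_ne le_top fun h => absurd hN (not_lt_of_ge ?_)
      have : (⊤ : L) • (⊤ : M) ≤ N := le_colon_iff.mp h.ge
      calc (⊤ : M) = (1 : L) • (⊤ : M) := (LatticeModule.one_smul ⊤).symm
        _ = (⊤ : L) • (⊤ : M) := by rw [MultiplicativeLattice.one_eq_top]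
        _ ≤ N := this
    · intro a b hab
      have h1 : (a * b) • (⊤ : M) ≤ N := le_colon_iff.mp hab
      rw [LatticeModule.mul_smul] at h1
      rcases hp a (b • ⊤) h1 with h | h
      · exact Or.inr (le_colon_iff.mpr h)
      · exact Or.inl (le_colon_iff.mpr h)
  · rintro ⟨-, hp⟩
    refine ⟨hN, fun a X haX => ?_⟩
    obtain ⟨c, rfl⟩ := hmul X
    have h1 : a * c ≤ colon L N ⊤ := by
      rw [le_colon_iff, LatticeModule.mul_smul]; exact haX
    rcases hp a c h1 with h | h
    · exact Or.inr (le_colon_iff.mp h)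
    · exact Or.inl (le_colon_iff.mp h)
end

section
/- Let L be a PG-lattice and M be a faithful multiplication PG-lattice L-module with I_M compact. Then (rad(N):I_M) = √(N:I_M) for every proper element N ∈ M. -/
open CompleteLattice

universe u v

section AuxProof

variable {L : Type u} {M : Type v} [MultiplicativeLattice L] [LatticeModule L M]

open MultiplicativeLattice LatticeModule

private lemma aux_le_one (a : L) : a ≤ 1 := by
  rw [MultiplicativeLattice.one_eq_top]; exact le_top

private lemma aux_mul_sup (a b c : L) : a * (b ⊔ c) = a * b ⊔ a * c := by
  rw [← sSup_pair, MultiplicativeLattice.mul_sSup, iSup_pair]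

private lemma aux_mul_le_mul_left {b c : L} (a : L) (h : b ≤ c) : a * b ≤ a * c := by
  have : a * c = a * b ⊔ a * c := by rw [← aux_mul_sup, sup_eq_right.mpr h]
  rw [this]; exact le_sup_left

private lemma aux_mul_le_left (a b : L) : a * b ≤ b := by
  calc a * b = b * a := mul_comm a b
    _ ≤ b * 1 := aux_mul_le_mul_left b (aux_le_one a)
    _ = b := mul_one b

private lemma aux_mul_le_right (a b : L) : a * b ≤ a := by
  rw [mul_comm]; exact aux_mul_le_left b a

private lemma aux_sup_smul (a b : L) (X : M) : (a ⊔ b) • X = a • X ⊔ b • X := by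
  rw [← sSup_pair, LatticeModule.sSup_smul, iSup_pair]

private lemma aux_smul_sup (a : L) (X Y : M) : a • (X ⊔ Y) = a • X ⊔ a • Y := by
  rw [← sSup_pair, LatticeModule.smul_sSup, iSup_pair]

private lemma aux_smul_le_smul_left {a b : L} (h : a ≤ b) (X : M) : a • X ≤ b • X := by
  have : b • X = a • X ⊔ b • X := by rw [← aux_sup_smul, sup_eq_right.mpr h]
  rw [this]; exact le_sup_left

private lemma aux_smul_le_smul_right (a : L) {X Y : M} (h : X ≤ Y) : a • X ≤ a • Y := by
  have : a • Y = a • X ⊔ a • Y := by rw [← aux_smul_sup, sup_eq_right.mpr h]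
  rw [this]; exact le_sup_left

private lemma aux_smul_le (a : L) (X : M) : a • X ≤ X := by
  calc a • X ≤ (1 : L) • X := aux_smul_le_smul_left (aux_le_one a) X
    _ = X := LatticeModule.one_smul X

private lemma aux_le_colon {x : L} {A B : M} (h : x • B ≤ A) : x ≤ colon L A B := le_sSup h

private lemma aux_colon_smul (A B : M) : colon L A B • B ≤ A := by
  rw [colon, LatticeModule.sSup_smul]
  exact iSup₂_le fun x hx => hx

private lemma aux_lcolon_mul (a b : L) : lcolon a b * b ≤ a := by
  rw [lcolon, mul_comm, MultiplicativeLattice.mul_sSup]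
  exact iSup₂_le fun x hx => by rwa [mul_comm]

private lemma aux_pow_compact {c : L} (hc : IsCompactElement c) :
    ∀ n : ℕ, IsCompactElement (c ^ (n + 1)) := by
  intro n
  induction n with
  | zero => simpa using hc
  | succ n ih =>
    have : c ^ (n + 2) = c ^ (n + 1) * c := pow_succ c (n + 1)
    rw [this]
    exact MultiplicativeLattice.mul_compact _ _ ih hc

private lemma aux_colon_top_smul (hmul : IsMultiplicationModule L M) (N : M) :
    colon L N (⊤ : M) • (⊤ : M) = N := by
  refine le_antisymm (aux_colon_smul N ⊤) ?_
  obtain ⟨e, he⟩ := hmul N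
  have : e ≤ colon L N ⊤ := aux_le_colon (le_of_eq he.symm)
  calc N = e • ⊤ := he
    _ ≤ colon L N ⊤ • ⊤ := aux_smul_le_smul_left this ⊤

/-- Lattice Nakayama: if `s • ⊤ = ⊤` and `⊤` is a finite join of principal elements,
then (with faithfulness) `s = 1`. -/
private lemma aux_nakayama (hfaith : IsFaithful L M) {s : L} (hs : s • (⊤ : M) = ⊤)
    (t : Finset M) (ht : ∀ E ∈ t, IsPrincipalElem L E) (htop : (⊤ : M) ≤ t.sup id) :
    s = 1 := by
  classical
  suffices h : ∀ t : Finset M, (∀ E ∈ t, IsPrincipalElem L E) →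
      ∀ u : L, s ⊔ u = 1 → u • (⊤ : M) ≤ t.sup id → s = 1 by
    refine h t ht 1 ?_ ?_
    · rw [MultiplicativeLattice.one_eq_top, sup_top_eq]
    · rw [LatticeModule.one_smul]; exact htop
  intro t
  induction t using Finset.induction_on with
  | empty =>
    intro _ u hsu hu
    rw [Finset.sup_empty] at hu
    have hub : u ≤ (⊥ : L) := by
      rw [← hfaith]
      exact aux_le_colon (le_trans (aux_smul_le_smul_right u le_top) hu)
    have : u = ⊥ := le_bot_iff.mp hub
    rw [this, sup_bot_eq] at hsu
    exact hsu
  | @insert E t hEt ih =>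
    intro hprin u hsu hu
    rw [Finset.sup_insert] at hu
    set F : M := t.sup id with hF
    have hE : IsPrincipalElem L E := hprin E (Finset.mem_insert_self E t)
    -- u • ⊤ = s • (u • ⊤) ≤ s • E ⊔ s • F  (here `id E = E`)
    have hid : (id E : M) = E := rfl
    rw [hid] at hu
    have h1 : u • (⊤ : M) ≤ s • E ⊔ s • F := by
      have e1 : u • (⊤ : M) = s • (u • (⊤ : M)) := by
        rw [← LatticeModule.mul_smul, mul_comm, LatticeModule.mul_smul, hs]
      calc u • (⊤ : M) = s • (u • (⊤ : M)) := e1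
        _ ≤ s • (E ⊔ F) := aux_smul_le_smul_right s hu
        _ = s • E ⊔ s • F := aux_smul_sup s E F
    set w : L := colon L (s • F) E with hw
    have hu' : u ≤ s ⊔ w := by
      rw [hw, hE.2 s (s • F)]
      exact aux_le_colon (le_trans (aux_smul_le_smul_right u le_top) h1)
    have hw1 : (u * w) • (⊤ : M) ≤ F := by
      have : (u * w) • (⊤ : M) = w • (u • (⊤ : M)) := by
        rw [mul_comm, LatticeModule.mul_smul]
      rw [this]
      calc w • (u • (⊤ : M)) ≤ w • (E ⊔ F) := aux_smul_le_smul_right w hu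
        _ = w • E ⊔ w • F := aux_smul_sup w E F
        _ ≤ s • F ⊔ F := sup_le_sup (aux_colon_smul (s • F) E) (aux_smul_le w F)
        _ ≤ F := sup_le (aux_smul_le s F) le_rfl
    have hsu' : s ⊔ u * w = 1 := by
      refine le_antisymm (aux_le_one _) ?_
      have h2 : u ≤ s ⊔ u * w := by
        conv_lhs => rw [← mul_one u, ← hsu, aux_mul_sup]
        refine sup_le (le_sup_of_le_left (aux_mul_le_left u s)) ?_
        calc u * u ≤ u * (s ⊔ w) := aux_mul_le_mul_left u hu'
          _ = u * s ⊔ u * w := aux_mul_sup u s w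
          _ ≤ s ⊔ u * w := sup_le_sup_right (aux_mul_le_left u s) _
      calc (1 : L) = s ⊔ u := hsu.symm
        _ ≤ s ⊔ u * w := sup_le le_sup_left h2
    exact ih (fun E' hE' => hprin E' (Finset.mem_insert_of_mem hE')) (u * w) hsu' hw1

/-- At every coatom `m` of `L`, the module is "m-cyclic": there are a compact `q ≰ m` and
a principal element `E` with `q • ⊤ ≤ E`. -/
private lemma aux_cyclic (hfaith : IsFaithful L M) (hmul : IsMultiplicationModule L M)
    (hPGM : IsPGModule L M) (hcomp : IsCompactElement (⊤ : M)) {m : L} (hm : IsCoatom m) :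
    ∃ q : L, ∃ E : M, IsCompactElement q ∧ ¬ q ≤ m ∧ IsPrincipalElem L E ∧
      q • (⊤ : M) ≤ E := by
  classical
  by_cases hcase : ∃ E : M, IsPrincipalElem L E ∧ ¬ colon L E ⊤ ≤ m
  · obtain ⟨E, hE, hEm⟩ := hcase
    have hq : ¬ ∀ x : L, IsCompactElement x → x ≤ colon L E ⊤ → x ≤ m := by
      intro h
      apply hEm
      conv_lhs => rw [MultiplicativeLattice.compactlyGenerated (colon L E ⊤)]
      exact sSup_le fun x hx => h x hx.1 hx.2
    push_neg at hq
    obtain ⟨q, hqc, hqle, hqm⟩ := hq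
    exact ⟨q, E, hqc, hqm, hE,
      le_trans (aux_smul_le_smul_left hqle ⊤) (aux_colon_smul E ⊤)⟩
  · push_neg at hcase
    -- then ⊤ = m • ⊤
    have htop : (⊤ : M) ≤ m • ⊤ := by
      conv_lhs => rw [hPGM ⊤]
      refine sSup_le fun P hP => ?_
      obtain ⟨e, he⟩ := hmul P
      have h1 : P ≤ colon L P ⊤ • ⊤ := by
        calc P = e • ⊤ := he
          _ ≤ colon L P ⊤ • ⊤ := aux_smul_le_smul_left (aux_le_colon (le_of_eq he.symm)) ⊤
      exact le_trans h1 (aux_smul_le_smul_left (hcase P hP.1) ⊤)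
    -- extract a single compact s ≤ m with s • ⊤ = ⊤
    have hmgen := MultiplicativeLattice.compactlyGenerated m
    set S : Set L := {c : L | IsCompactElement c ∧ c ≤ m} with hS
    set T : Set M := {X : M | ∃ c ∈ S, X = c • (⊤ : M)} with hT
    have hTne : T.Nonempty := ⟨(⊥ : L) • (⊤ : M), ⊥,
      ⟨(CompleteLattice.isCompactElement_iff_exists_le_sSup_of_le_sSup L ⊥).mpr
        (fun u hu => ⟨∅, by simp⟩), bot_le⟩, rfl⟩
    have hTdir : DirectedOn (· ≤ ·) T := by
      rintro X ⟨c1, hc1, rfl⟩ Y ⟨c2, hc2, rfl⟩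
      refine ⟨(c1 ⊔ c2) • (⊤ : M), ⟨c1 ⊔ c2, ⟨?_, sup_le hc1.2 hc2.2⟩, rfl⟩,
        aux_smul_le_smul_left le_sup_left ⊤, aux_smul_le_smul_left le_sup_right ⊤⟩
      have := CompleteLattice.isCompactElement_finsetSup (f := id) {c1, c2} ?_
      · simpa using this
      · intro z hz
        simp only [Finset.mem_insert, Finset.mem_singleton] at hz
        rcases hz with rfl | rfl
        · exact hc1.1
        · exact hc2.1
    have htop2 : (⊤ : M) ≤ sSup T := by
      refine le_trans htop ?_
      have : m • (⊤ : M) = ⨆ c ∈ S, c • (⊤ : M) := by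
        conv_lhs => rw [hmgen]
        exact LatticeModule.sSup_smul S ⊤
      rw [this]
      exact iSup₂_le fun c hc => le_sSup ⟨c, hc, rfl⟩
    obtain ⟨X, ⟨s, hsS, rfl⟩, hXtop⟩ :=
      (CompleteLattice.isCompactElement_iff_le_of_directed_sSup_le M ⊤).mp hcomp
        T hTne hTdir htop2
    have hsm : s ≤ m := hsS.2
    have hstop : s • (⊤ : M) = ⊤ := le_antisymm le_top hXtop
    -- finite principal decomposition of ⊤
    obtain ⟨tp, htp, htpsup⟩ := (CompleteLattice.isCompactElement_iff_exists_le_sSup_of_le_sSup M ⊤).mp hcomp _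
      (le_of_eq (hPGM ⊤))
    have hs1 : s = 1 := aux_nakayama hfaith hstop tp (fun E hE => (htp hE).1) htpsup
    exfalso
    apply hm.1
    refine le_antisymm le_top ?_
    rw [← MultiplicativeLattice.one_eq_top, ← hs1]
    exact hsm

/-- Cancellation: in a faithful multiplication PG-module with compact top,
`x • ⊤ ≤ b • ⊤` implies `x ≤ b`. -/
private lemma aux_cancel (hfaith : IsFaithful L M) (hmul : IsMultiplicationModule L M)
    (hPGM : IsPGModule L M) (hcomp : IsCompactElement (⊤ : M)) {x b : L}
    (h : x • (⊤ : M) ≤ b • (⊤ : M)) : x ≤ b := by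
  by_contra hxb
  set r : L := lcolon b x with hr
  have hrx : r * x ≤ b := aux_lcolon_mul b x
  have hr1 : r ≠ ⊤ := by
    intro hrt
    apply hxb
    calc x = 1 * x := (one_mul x).symm
      _ = r * x := by rw [MultiplicativeLattice.one_eq_top, ← hrt]
      _ ≤ b := hrx
  obtain ⟨m, hmco, hrm⟩ :=
    (CompleteLattice.coatomic_of_top_compact MultiplicativeLattice.top_compact).eq_top_or_exists_le_coatom r |>.resolve_left hr1
  obtain ⟨q, E, hqc, hqm, hE, hqE⟩ := aux_cyclic hfaith hmul hPGM hcomp hmco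
  set z : L := colon L (⊥ : M) E with hz
  have hzq : z * q = ⊥ := by
    refine le_bot_iff.mp ?_
    have h1 : (z * q) • (⊤ : M) ≤ ⊥ := by
      calc (z * q) • (⊤ : M) = z • (q • ⊤) := LatticeModule.mul_smul z q ⊤
        _ ≤ z • E := aux_smul_le_smul_right z hqE
        _ ≤ ⊥ := aux_colon_smul ⊥ E
    rw [← hfaith]
    exact aux_le_colon h1
  have h1 : (q * x) • (⊤ : M) ≤ b • E := by
    calc (q * x) • (⊤ : M) = q • (x • ⊤) := LatticeModule.mul_smul q x ⊤
      _ ≤ q • (b • ⊤) := aux_smul_le_smul_right q h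
      _ = b • (q • ⊤) := by rw [← LatticeModule.mul_smul, mul_comm, LatticeModule.mul_smul]
      _ ≤ b • E := aux_smul_le_smul_right b hqE
  have h2 : q * x ≤ b ⊔ z := by
    have hjp := hE.2 b (⊥ : M)
    rw [sup_bot_eq] at hjp
    rw [hz, hjp]
    exact aux_le_colon (le_trans (aux_smul_le_smul_right (q * x) le_top) h1)
  have h3 : q * q ≤ m := by
    have h4 : (q * q) * x ≤ b := by
      calc (q * q) * x = q * (q * x) := mul_assoc q q x
        _ ≤ q * (b ⊔ z) := aux_mul_le_mul_left q h2
        _ = q * b ⊔ q * z := aux_mul_sup q b z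
        _ ≤ b ⊔ ⊥ := sup_le_sup (aux_mul_le_left q b) (le_of_eq (by rw [mul_comm]; exact hzq))
        _ = b := sup_bot_eq b
    have h5 : q * q ≤ r := by rw [hr, lcolon]; exact le_sSup h4
    exact le_trans h5 hrm
  apply hqm
  have hmq : m ⊔ q = ⊤ := by
    refine hmco.2 (m ⊔ q) (lt_of_le_of_ne le_sup_left ?_)
    intro hh
    exact hqm (le_of_eq_of_le rfl (hh ▸ le_sup_right))
  calc q = q * 1 := (mul_one q).symm
    _ = q * (m ⊔ q) := by rw [MultiplicativeLattice.one_eq_top, hmq]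
    _ = q * m ⊔ q * q := aux_mul_sup q m q
    _ ≤ m := sup_le (aux_mul_le_left q m) h3

private lemma aux_colon_smul_top_eq (hfaith : IsFaithful L M)
    (hmul : IsMultiplicationModule L M) (hPGM : IsPGModule L M)
    (hcomp : IsCompactElement (⊤ : M)) (b : L) :
    colon L (b • (⊤ : M)) (⊤ : M) = b :=
  le_antisymm (sSup_le fun _ hx => aux_cancel hfaith hmul hPGM hcomp hx)
    (aux_le_colon le_rfl)

/-- Powers descend along primes: `x^(n+1) • ⊤ ≤ P` implies `x • ⊤ ≤ P` for prime `P`. -/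
private lemma aux_prime_pow {P : M} (hP : IsPrimeM L P) (x : L) :
    ∀ n : ℕ, x ^ (n + 1) • (⊤ : M) ≤ P → x • (⊤ : M) ≤ P := by
  intro n
  induction n with
  | zero => intro h; rwa [pow_one] at h
  | succ n ih =>
    intro h
    have h1 : x ^ (n + 2) • (⊤ : M) = x • (x ^ (n + 1) • (⊤ : M)) := by
      rw [← LatticeModule.mul_smul, ← pow_succ']
    rw [h1] at h
    rcases hP.2 x (x ^ (n + 1) • (⊤ : M)) h with h2 | h2
    · exact ih h2
    · exact h2

end AuxProof

theorem stmt1 {L : Type u} {M : Type v} [MultiplicativeLattice L] [LatticeModule L M]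
    (hPG : IsPGLattice L) (hfaith : IsFaithful L M)
    (hmul : IsMultiplicationModule L M) (hPGM : IsPGModule L M)
    (hcomp : IsCompactElement (⊤ : M)) :
    ∀ N : M, N < ⊤ → colon L (mrad L N) (⊤ : M) = lrad (colon L N (⊤ : M)) := by
  intro N hN
  set a : L := colon L N (⊤ : M) with ha
  have haN : a • (⊤ : M) = N := aux_colon_top_smul hmul N
  refine le_antisymm ?_ ?_
  · -- hard direction: (rad N : ⊤) ≤ √a
    refine sSup_le fun x hx => ?_
    -- hx : x • ⊤ ≤ mrad L N
    conv_lhs => rw [MultiplicativeLattice.compactlyGenerated x]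
    refine sSup_le fun c hc => ?_
    obtain ⟨hcc, hcx⟩ := hc
    by_contra hcl
    have hpow : ∀ n : ℕ, 0 < n → ¬ c ^ n ≤ a := fun n hn hle =>
      hcl (le_sSup ⟨hcc, n, hn, hle⟩)
    -- Zorn: maximal p ≥ a avoiding all powers of c
    set S : Set L := {q : L | a ≤ q ∧ ∀ n : ℕ, 0 < n → ¬ c ^ n ≤ q} with hS
    have haS : a ∈ S := ⟨le_rfl, hpow⟩
    have hzorn : ∀ ch ⊆ S, IsChain (· ≤ ·) ch → ∀ y ∈ ch, ∃ ub ∈ S, ∀ z ∈ ch, z ≤ ub := by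
      intro ch hchS hchain y hy
      refine ⟨sSup ch, ⟨le_trans (hchS hy).1 (le_sSup hy), ?_⟩, fun z hz => le_sSup hz⟩
      intro n hn hle
      have hcn : IsCompactElement (c ^ n) := by
        obtain ⟨n', rfl⟩ := Nat.exists_eq_add_of_lt hn
        simpa [Nat.add_comm] using aux_pow_compact hcc n'
      obtain ⟨y', hy', hcy'⟩ :=
        (CompleteLattice.isCompactElement_iff_le_of_directed_sSup_le L (c ^ n)).mp hcn
          ch ⟨y, hy⟩ hchain.directedOn hle
      exact (hchS hy').2 n hn hcy'
    obtain ⟨p, hap, hpS, hpmax⟩ : ∃ p : L, a ≤ p ∧ p ∈ S ∧ ∀ z ∈ S, p ≤ z → z ≤ p := by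
      obtain ⟨p, hap, hmaximal⟩ := zorn_le_nonempty₀ S hzorn a haS
      exact ⟨p, hap, hmaximal.1, fun z hz hpz => hmaximal.2 hz hpz⟩
    -- p is prime in L
    have hptop : p ≠ ⊤ := by
      intro hpt
      exact hpS.2 1 one_pos (by rw [hpt]; exact le_top)
    have hprime : ∀ u v : L, u * v ≤ p → u ≤ p ∨ v ≤ p := by
      intro u v huv
      by_contra hcon
      push_neg at hcon
      obtain ⟨hu, hv⟩ := hcon
      have hgen : ∀ w : L, ¬ w ≤ p → ∃ n : ℕ, 0 < n ∧ c ^ n ≤ p ⊔ w := by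
        intro w hw
        by_contra hnone
        push_neg at hnone
        have hmem : p ⊔ w ∈ S := ⟨le_trans hap le_sup_left,
          fun n hn hle => (hnone n hn) hle⟩
        have := hpmax _ hmem le_sup_left
        exact hw (le_trans le_sup_right this)
      obtain ⟨n, hn, hcn⟩ := hgen u hu
      obtain ⟨k, hk, hck⟩ := hgen v hv
      refine hpS.2 (n + k) (Nat.add_pos_left hn k) ?_
      calc c ^ (n + k) = c ^ n * c ^ k := pow_add c n k
        _ ≤ (p ⊔ u) * c ^ k := by rw [mul_comm (c^n), mul_comm (p ⊔ u)];
                                  exact aux_mul_le_mul_left _ hcn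
        _ ≤ (p ⊔ u) * (p ⊔ v) := aux_mul_le_mul_left _ hck
        _ = (p ⊔ u) * p ⊔ ((p ⊔ u) * v) := aux_mul_sup _ p v
        _ ≤ p := by
            refine sup_le (aux_mul_le_left _ p) ?_
            rw [mul_comm, aux_mul_sup]
            exact sup_le (aux_mul_le_left v p) (by rw [mul_comm]; exact huv)
    -- P := p • ⊤ is prime in M, above N, and pulls back to p
    set P : M := p • (⊤ : M) with hP
    have hPN : N ≤ P := by rw [← haN]; exact aux_smul_le_smul_left hap ⊤
    have hPcolon : colon L P (⊤ : M) = p := aux_colon_smul_top_eq hfaith hmul hPGM hcomp p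
    have hPtop : P < ⊤ := by
      rcases lt_or_eq_of_le (le_top : P ≤ ⊤) with h | h
      · exact h
      · exfalso
        apply hptop
        rw [← hPcolon, h]
        refine le_antisymm le_top ?_
        rw [← MultiplicativeLattice.one_eq_top]
        exact aux_le_colon le_top
    have hPprime : IsPrimeM L P := by
      refine ⟨hPtop, fun u X huX => ?_⟩
      obtain ⟨e, rfl⟩ := hmul X
      have hue : u * e ≤ p := by
        rw [← hPcolon]
        exact aux_le_colon (by rw [LatticeModule.mul_smul]; exact huX)
      rcases hprime u e hue with h | h
      · right; rw [hP]; exact aux_smul_le_smul_left h ⊤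
      · left; rw [hP]; exact aux_smul_le_smul_left h ⊤
    have hcP : c • (⊤ : M) ≤ P := by
      calc c • (⊤ : M) ≤ x • ⊤ := aux_smul_le_smul_left hcx ⊤
        _ ≤ mrad L N := hx
        _ ≤ P := sInf_le ⟨hPprime, hPN⟩
    have : c ≤ p := by
      rw [← hPcolon]; exact aux_le_colon hcP
    exact hpS.2 1 one_pos (by rwa [pow_one])
  · -- easy direction: √a ≤ (rad N : ⊤)
    refine aux_le_colon ?_
    rw [lrad, LatticeModule.sSup_smul]
    refine iSup₂_le fun x hx => ?_
    obtain ⟨hxc, n, hn, hxa⟩ := hx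
    refine le_sInf fun P hPm => ?_
    obtain ⟨hPprime, hNP⟩ := hPm
    have hxn : x ^ n • (⊤ : M) ≤ P := by
      calc x ^ n • (⊤ : M) ≤ a • ⊤ := aux_smul_le_smul_left hxa ⊤
        _ = N := haN
        _ ≤ P := hNP
    cases n with
    | zero => exact absurd hn (lt_irrefl 0)
    | succ n' => exact aux_prime_pow hPprime x n' hxn
end

section
/- Let M be an L-module and N a proper element of M. If N is pseudo-primary and S_p(N) is a prime element of M for some prime element p ∈ L with (N:I_M) ≤ p, then rad(N) is a prime element of M (indeed S_p(N) = rad(N)). -/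
open CompleteLattice

universe u v

theorem stmt11 {L : Type u} {M : Type v} [MultiplicativeLattice L] [LatticeModule L M]
    (N : M) (hNp : N < ⊤) (hN : IsPseudoPrimary L N) (p : L) (hp : IsPrimeL p)
    (hle : colon L N (⊤ : M) ≤ p) (hsat : IsPrimeM L (saturation L N p)) :
    IsPrimeM L (mrad L N) ∧ saturation L N p = mrad L N := by
  have hNsat : N ≤ saturation L N p :=
    le_sSup ⟨1, by simpa [MultiplicativeLattice.one_eq_top] using hp.1.not_ge,
      le_of_eq (LatticeModule.one_smul N)⟩
  have hsatle : saturation L N p ≤ mrad L N := by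
    apply _root_.sSup_le
    rintro X ⟨c, hcp, hcX⟩
    rcases hN.2 c X hcX with h | h
    · exact absurd (h.trans hle) hcp
    · exact h
  have heq : saturation L N p = mrad L N :=
    le_antisymm hsatle (sInf_le ⟨hsat, hNsat⟩)
  exact ⟨heq ▸ hsat, heq⟩
end

section
/- A proper element N of an L-module M is prime if and only if N is both primary and classical prime. -/
open CompleteLattice

universe u v

lemma lm_smul_sup {L : Type u} {M : Type v} [MultiplicativeLattice L] [LatticeModule L M]
    (a : L) (X Y : M) : a • (X ⊔ Y) = a • X ⊔ a • Y := by
  have h := LatticeModule.smul_sSup a ({X, Y} : Set M)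
  rw [sSup_pair] at h
  rw [h, iSup_pair]

lemma lm_smul_mono {L : Type u} {M : Type v} [MultiplicativeLattice L] [LatticeModule L M]
    (a : L) {X Y : M} (h : X ≤ Y) : a • X ≤ a • Y := by
  have : a • Y = a • X ⊔ a • Y := by
    rw [← lm_smul_sup]; rw [sup_eq_right.mpr h]
  rw [this]; exact le_sup_left

theorem stmt15 {L : Type u} {M : Type v} [MultiplicativeLattice L] [LatticeModule L M]
    (N : M) (hN : N < ⊤) :
    IsPrimeM L N ↔ IsPrimaryM L N ∧ IsClassicalPrime L N := by
  constructor
  · rintro ⟨h1, h2⟩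
    refine ⟨⟨h1, fun a X hax => ?_⟩, ⟨h1, fun a b K habk => ?_⟩⟩
    · rcases h2 a X hax with h | h
      · exact Or.inl h
      · exact Or.inr ⟨1, one_pos, by simpa using h⟩
    · rw [LatticeModule.mul_smul] at habk
      rcases h2 a (b • K) habk with h | h
      · exact Or.inr h
      · exact Or.inl (le_trans (lm_smul_mono a le_top) h)
  · rintro ⟨⟨_, hprim⟩, ⟨_, hcl⟩⟩
    refine ⟨hN, fun a X hax => ?_⟩
    rcases hprim a X hax with h | ⟨n, hn, hpow⟩
    · exact Or.inl h
    · right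
      clear hax
      induction n with
      | zero => exact absurd hn (lt_irrefl 0)
      | succ k ih =>
        rcases Nat.eq_zero_or_pos k with hk | hk
        · subst hk; simpa using hpow
        · rw [pow_succ, mul_comm, LatticeModule.mul_smul] at hpow
          have : (a * (a ^ k)) • (⊤ : M) ≤ N := by
            rw [LatticeModule.mul_smul]
            exact le_trans (lm_smul_mono a (lm_smul_mono _ le_top)) hpow
          rcases hcl a (a ^ k) ⊤ this with h | h
          · exact h
          · exact ih hk h
end
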